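/- arXiv:1501.06869 — 6 statements merged into one kernel-verified Lean document; each statement's English description precedes it below -/
import Mathlib

section
/- Any closed planar trivalent graph contains either a face with at most four edges, or two adjacent pentagonal faces (a pentapent), or a pentagonal face adjacent to a hexagonal face (a hexapent). -/
/-- The setoid on darts whose classes are the cycles (orbits) of a permutation. -/
def Equiv.Perm.cycleSetoid {D : Type*} (f : Equiv.Perm D) : Setoid D :=
  ⟨f.SameCycle, ⟨fun x => Equiv.Perm.SameCycle.refl f x,
    fun h => h.symm, fun h h' => h.trans h'⟩⟩

/-- A closed planar trivalent graph, encoded as a combinatorial map on the sphere: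
a finite set of darts `D`, a fixed-point-free involution `α` pairing darts into
edges, and a permutation `σ` whose orbits (all of size `3`) are the vertices.
Faces are the orbits of `σ * α`.  Connectivity is transitivity of the group
generated by `σ` and `α`, and the embedding in the sphere is expressed by the
Euler formula `V - E + F = 2` (with `E = |D|/2`). -/
structure ClosedPlanarTrivalentGraph where
  D : Type
  fintypeD : Fintype D
  σ : Equiv.Perm D
  α : Equiv.Perm D
  α_invol : ∀ d, α (α d) = d
  α_fpf : ∀ d, α d ≠ d
  σ_cube : ∀ d, σ (σ (σ d)) = d
  σ_fpf : ∀ d, σ d ≠ d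
  connected : ∀ d d' : D, ∃ g ∈ Subgroup.closure ({σ, α} : Set (Equiv.Perm D)), g d = d'
  euler : 2 * (Nat.card (Quotient σ.cycleSetoid) + Nat.card (Quotient (σ * α).cycleSetoid))
            = Nat.card D + 4

namespace ClosedPlanarTrivalentGraph

variable (G : ClosedPlanarTrivalentGraph)

instance : Fintype G.D := G.fintypeD

/-- The face permutation. -/
def φ : Equiv.Perm G.D := G.σ * G.α

/-- The faces of the graph: orbits of the face permutation. -/
def Faces := Quotient G.φ.cycleSetoid

/-- The face containing a given dart. -/
def faceOf (d : G.D) : G.Faces := Quotient.mk G.φ.cycleSetoid d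

/-- The number of edges of a face (the size of the corresponding orbit of darts). -/
noncomputable def faceSize (F : G.Faces) : ℕ := Nat.card {d : G.D // G.faceOf d = F}

noncomputable instance : Fintype G.Faces :=
  @Quotient.fintype _ _ G.φ.cycleSetoid (fun _ _ => Classical.dec _)

/-- Two faces are adjacent if they are distinct and share an edge. -/
def FaceAdj (F F' : G.Faces) : Prop :=
  F ≠ F' ∧ ∃ d : G.D, G.faceOf d = F ∧ G.faceOf (G.α d) = F'

end ClosedPlanarTrivalentGraph

/-!
Suppose every face has at least five sides and no pentagon borders a pentagon or a hexagon.
Give an `n`-gon the charge `6 - n`. As the graph is trivalent, `|D| = 2E = 3V`, and Euler's formula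
makes the total charge `6F - 2E = 12`. Now let every pentagon send a fifth of its charge across
each of its sides. A pentagon does not border itself (going round a face with at most five sides
from one side of an edge to the other would produce a face with a single side), so pentagons and
hexagons end with charge `0`. An `n`-gon with `n ≥ 7` receives across at most `n / 2` sides,
because the faces across two consecutive sides border each other, so it ends with charge at most
`6 - n + n / 10 < 0`. Hence the total charge is not positive, a contradiction.
-/

open Function Finset

namespace Equiv.Perm

variable {α : Type*} [Finite α] (f : Perm α)

theorem card_sameCycle (x : α) : Nat.card {y // f.SameCycle x y} = minimalPeriod f x := by
  have : Fintype α := Fintype.ofFinite α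
  classical
  have e : {y // f.SameCycle x y} ≃ MulAction.orbit (Subgroup.zpowers f) x :=
    Equiv.subtypeEquivRight fun y =>
      ⟨fun ⟨i, hi⟩ => ⟨⟨f ^ i, i, rfl⟩, hi⟩, fun ⟨⟨_, i, rfl⟩, h⟩ => ⟨i, h⟩⟩
  rw [Nat.card_congr e, Nat.card_eq_fintype_card, ← MulAction.minimalPeriod_eq_card]
  rfl

theorem minimalPeriod_pos (x : α) : 0 < minimalPeriod f x := by
  rw [← card_sameCycle]
  have : Nonempty {y // f.SameCycle x y} := ⟨⟨x, SameCycle.refl f x⟩⟩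
  exact Nat.card_pos

theorem SameCycle.exists_pow_eq_of_lt_minimalPeriod {f : Perm α} {x y : α} (h : f.SameCycle x y) :
    ∃ i < minimalPeriod f x, (f ^ i) x = y := by
  obtain ⟨n, -, rfl⟩ := h.exists_nat_pow_eq
  refine ⟨n % minimalPeriod f x, Nat.mod_lt _ (f.minimalPeriod_pos x), ?_⟩
  rw [← iterate_eq_pow, ← iterate_eq_pow, iterate_mod_minimalPeriod_eq]

theorem card_eq_mul_card_quotient_cycleSetoid {k : ℕ} (h : ∀ x, minimalPeriod f x = k) :
    Nat.card α = k * Nat.card (Quotient f.cycleSetoid) := by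
  have : Fintype α := Fintype.ofFinite α
  have : Fintype (Quotient f.cycleSetoid) := Fintype.ofFinite _
  have hfib : ∀ q : Quotient f.cycleSetoid, Nat.card {x // Quotient.mk _ x = q} = k := by
    rintro ⟨x⟩
    rw [← h x, ← card_sameCycle]
    exact Nat.card_congr (Equiv.subtypeEquivRight fun y => Quotient.eq.trans ⟨.symm, .symm⟩)
  rw [← Nat.card_congr (Equiv.sigmaFiberEquiv (Quotient.mk f.cycleSetoid)), Nat.card_sigma,
    Finset.sum_congr rfl fun q _ => hfib q, Finset.sum_const, Finset.card_univ, smul_eq_mul,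
    Nat.card_eq_fintype_card, mul_comm]

end Equiv.Perm

namespace ClosedPlanarTrivalentGraph

open scoped Classical

variable (G : ClosedPlanarTrivalentGraph)

theorem faceOf_eq_faceOf_iff {a b : G.D} : G.faceOf a = G.faceOf b ↔ G.φ.SameCycle a b :=
  Quotient.eq

@[simp]
theorem faceOf_φ (d : G.D) : G.faceOf (G.φ d) = G.faceOf d :=
  (G.faceOf_eq_faceOf_iff).mpr (Equiv.Perm.sameCycle_apply_left.mpr (.refl _ _))

theorem faceSize_faceOf (d : G.D) : G.faceSize (G.faceOf d) = minimalPeriod G.φ d := by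
  rw [← G.φ.card_sameCycle]
  exact Nat.card_congr
    (Equiv.subtypeEquivRight fun _ => (G.faceOf_eq_faceOf_iff).trans ⟨.symm, .symm⟩)

theorem pow_faceSize_apply (d : G.D) : (G.φ ^ G.faceSize (G.faceOf d)) d = d := by
  rw [faceSize_faceOf, ← Equiv.Perm.iterate_eq_pow, iterate_minimalPeriod]

theorem exists_pow_φ_eq_of_faceOf_eq {d e : G.D} (h : G.faceOf e = G.faceOf d) :
    ∃ i < G.faceSize (G.faceOf d), (G.φ ^ i) d = e := by
  rw [faceSize_faceOf]
  exact ((G.faceOf_eq_faceOf_iff).mp h).symm.exists_pow_eq_of_lt_minimalPeriod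

theorem φ_apply_ne_self {d : G.D} (h : 1 < G.faceSize (G.faceOf d)) : G.φ d ≠ d := by
  rw [faceSize_faceOf] at h
  exact fun hd => h.ne' (minimalPeriod_eq_one_iff_isFixedPt.mpr hd)

theorem sum_comp_faceOf {M : Type*} [AddCommMonoid M] (f : G.Faces → M) :
    ∑ d, f (G.faceOf d) = ∑ F, G.faceSize F • f F := by
  rw [← Fintype.sum_fiberwise' G.faceOf f]
  refine Finset.sum_congr rfl fun F _ => ?_
  rw [Finset.sum_const, Finset.card_univ, faceSize, Nat.card_eq_fintype_card]

theorem minimalPeriod_σ (d : G.D) : minimalPeriod G.σ d = 3 := by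
  have hdvd : minimalPeriod G.σ d ∣ 3 := IsPeriodicPt.minimalPeriod_dvd (G.σ_cube d)
  have hne : minimalPeriod G.σ d ≠ 1 := fun h =>
    G.σ_fpf d (minimalPeriod_eq_one_iff_isFixedPt.mp h)
  exact ((Nat.dvd_prime Nat.prime_three).mp hdvd).resolve_left hne

theorem six_mul_card_faces : 6 * Fintype.card G.Faces = Fintype.card G.D + 12 := by
  have hV := G.σ.card_eq_mul_card_quotient_cycleSetoid G.minimalPeriod_σ
  have hE := G.euler
  rw [Nat.card_eq_fintype_card (α := G.D)] at hV hE
  rw [show Nat.card (Quotient (G.σ * G.α).cycleSetoid) = Fintype.card G.Faces from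
    Nat.card_eq_fintype_card] at hE
  omega

theorem φ_apply_ne_α (d : G.D) : G.φ d ≠ G.α d :=
  G.σ_fpf (G.α d)

theorem isFixedPt_of_φ_φ_eq_α {d : G.D} (h : G.φ (G.φ d) = G.α d) :
    IsFixedPt G.φ (G.σ (G.σ (G.α d))) := by
  have h₁ : G.α (G.σ (G.α d)) = G.σ (G.σ (G.α d)) :=
    G.σ.injective (h.trans (G.σ_cube _).symm)
  have h₂ : G.α (G.σ (G.σ (G.α d))) = G.σ (G.α d) := by rw [← h₁, G.α_invol]
  show G.σ (G.α _) = _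
  rw [h₂]

theorem pow_φ_apply_ne_α (hφ : ∀ d, G.φ d ≠ d) {j : ℕ} (hj : j ≤ 2) (d : G.D) :
    (G.φ ^ j) d ≠ G.α d := by
  interval_cases j
  · exact (G.α_fpf d).symm
  · exact G.φ_apply_ne_α d
  · exact fun h => hφ _ (G.isFixedPt_of_φ_φ_eq_α h)

theorem faceOf_α_ne_faceOf (hφ : ∀ d, G.φ d ≠ d) {d : G.D} (hd : G.faceSize (G.faceOf d) ≤ 5) :
    G.faceOf (G.α d) ≠ G.faceOf d := by
  intro h
  obtain ⟨i, hi, hid⟩ := G.exists_pow_φ_eq_of_faceOf_eq h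
  -- going round the face, `d` reaches `α d` in `i` steps and `α d` reaches `d` in the
  -- remaining `faceSize - i`; one of the two is at most `2`
  rcases le_or_gt i 2 with hi2 | hi2
  · exact G.pow_φ_apply_ne_α hφ hi2 d hid
  · refine G.pow_φ_apply_ne_α hφ (j := G.faceSize (G.faceOf d) - i) (by omega) (G.α d) ?_
    rw [G.α_invol, ← hid, ← Equiv.Perm.mul_apply, ← pow_add, Nat.sub_add_cancel hi.le,
      pow_faceSize_apply]

/-- The faces across two consecutive sides `d`, `φ d` of a face meet along the third edge at the
vertex of `φ d`, whose darts are `σ² (α d)` and its reverse. -/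
theorem exists_edge_between_faces_across (d : G.D) :
    ∃ e, G.faceOf e = G.faceOf (G.α (G.φ d)) ∧ G.faceOf (G.α e) = G.faceOf (G.α d) := by
  refine ⟨G.σ (G.σ (G.α d)), ?_, ?_⟩
  · rw [← G.faceOf_φ (G.α (G.φ d))]
    show _ = G.faceOf (G.σ (G.α (G.α (G.σ (G.α d)))))
    rw [G.α_invol]
  · rw [← G.faceOf_φ]
    show G.faceOf (G.σ (G.α (G.α (G.σ (G.σ (G.α d)))))) = _
    rw [G.α_invol, G.σ_cube]

theorem card_filter_faceOf_eq (F : G.Faces) : #{d | G.faceOf d = F} = G.faceSize F := by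
  rw [faceSize, Nat.card_eq_fintype_card, Fintype.card_subtype]

theorem two_mul_card_filter_le (P : G.D → Prop) [DecidablePred P] (hP : ∀ d, P d → ¬ P (G.φ d))
    (F : G.Faces) :
    2 * #{d | G.faceOf d = F ∧ P d} ≤ G.faceSize F := by
  have hinj : #{d | G.faceOf d = F ∧ P d} ≤ #{d | G.faceOf d = F ∧ ¬ P d} :=
    card_le_card_of_injOn G.φ (fun d hd => by simp_all) G.φ.injective.injOn
  have hsplit := card_filter_add_card_filter_not (s := {d | G.faceOf d = F}) (p := P)
  rw [card_filter_faceOf_eq, filter_filter, filter_filter] at hsplit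
  omega

noncomputable def numSidesFacing (k : ℕ) (F : G.Faces) : ℕ :=
  #{d | G.faceOf d = F ∧ G.faceSize (G.faceOf (G.α d)) = k}

theorem sum_numSidesFacing (k : ℕ) :
    ∑ F, G.numSidesFacing k F = ∑ F, if G.faceSize F = k then k else 0 := by
  calc ∑ F, G.numSidesFacing k F
      = #{d | G.faceSize (G.faceOf (G.α d)) = k} := by
        rw [card_eq_sum_card_fiberwise (f := G.faceOf) (t := univ) fun _ _ => mem_univ _]
        simp only [numSidesFacing, filter_filter, and_comm]
    _ = ∑ d, if G.faceSize (G.faceOf d) = k then 1 else 0 := by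
        rw [card_filter]
        exact Equiv.sum_comp G.α fun d => if G.faceSize (G.faceOf d) = k then 1 else 0
    _ = ∑ F, if G.faceSize F = k then k else 0 := by
        rw [G.sum_comp_faceOf fun F => if G.faceSize F = k then 1 else 0]
        refine sum_congr rfl fun F _ => ?_
        split_ifs with h <;> simp [h]

/-- Five times the charge `6 - n` of an `n`-gon `F`, after every pentagon has sent a fifth of its
charge across each of its sides. -/
noncomputable def charge (F : G.Faces) : ℤ :=
  5 * (6 - G.faceSize F) - (if G.faceSize F = 5 then 5 else 0) + G.numSidesFacing 5 F

theorem sum_charge : ∑ F, G.charge F = 60 := by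
  have hsize : ∑ F, (G.faceSize F : ℤ) = Fintype.card G.D := by
    have := G.sum_comp_faceOf fun _ => (1 : ℤ)
    simpa [eq_comm] using this
  have hsides : ∑ F, (G.numSidesFacing 5 F : ℤ) = ∑ F, if G.faceSize F = 5 then 5 else 0 := by
    exact_mod_cast congrArg (Nat.cast : ℕ → ℤ) (G.sum_numSidesFacing 5)
  have heuler : 6 * (Fintype.card G.Faces : ℤ) = Fintype.card G.D + 12 := by
    exact_mod_cast G.six_mul_card_faces
  simp only [charge, sum_add_distrib, sum_sub_distrib, ← mul_sum, sum_const, card_univ,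
    hsize, hsides, nsmul_eq_mul]
  linarith

theorem charge_nonpos (hsize : ∀ F, 5 ≤ G.faceSize F)
    (hacross : ∀ d, G.faceSize (G.faceOf (G.α d)) = 5 → 7 ≤ G.faceSize (G.faceOf d))
    (F : G.Faces) : G.charge F ≤ 0 := by
  have h5 := hsize F
  rcases lt_or_ge (G.faceSize F) 7 with h7 | h7
  · have hnone : G.numSidesFacing 5 F = 0 := by
      rw [numSidesFacing, card_eq_zero, filter_eq_empty_iff]
      rintro d - ⟨rfl, hd⟩
      exact absurd (hacross d hd) (by omega)
    rw [charge, hnone]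
    interval_cases G.faceSize F <;> norm_num
  · have hsparse : ∀ d, G.faceSize (G.faceOf (G.α d)) = 5 →
        ¬ G.faceSize (G.faceOf (G.α (G.φ d))) = 5 := by
      intro d hd hφd
      obtain ⟨e, he, hαe⟩ := G.exists_edge_between_faces_across d
      have := hacross e (hαe ▸ hd)
      rw [he] at this
      omega
    have : 2 * G.numSidesFacing 5 F ≤ G.faceSize F := G.two_mul_card_filter_le _ hsparse F
    rw [charge, if_neg (by omega)]
    omega

end ClosedPlanarTrivalentGraph

/-- Any closed planar trivalent graph contains a face with at most four edges,
or a pentapent (two adjacent pentagonal faces), or a hexapent (a pentagonal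
face adjacent to a hexagonal face). -/
theorem stmt_1 (G : ClosedPlanarTrivalentGraph) :
    (∃ F : G.Faces, G.faceSize F ≤ 4) ∨
    (∃ F F' : G.Faces, G.FaceAdj F F' ∧ G.faceSize F = 5 ∧ G.faceSize F' = 5) ∨
    (∃ F F' : G.Faces, G.FaceAdj F F' ∧ G.faceSize F = 5 ∧ G.faceSize F' = 6) := by
  by_contra! h
  obtain ⟨hsize, hpentapent, hhexapent⟩ := h
  have hφ : ∀ d, G.φ d ≠ d := fun d => G.φ_apply_ne_self (by linarith [hsize (G.faceOf d)])
  have hacross : ∀ d, G.faceSize (G.faceOf (G.α d)) = 5 → 7 ≤ G.faceSize (G.faceOf d) := by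
    intro d hd
    have hne := G.faceOf_α_ne_faceOf hφ (d := G.α d) hd.le
    rw [G.α_invol] at hne
    have hadj : G.FaceAdj (G.faceOf (G.α d)) (G.faceOf d) :=
      ⟨hne.symm, G.α d, rfl, by rw [G.α_invol]⟩
    have h5 := hsize (G.faceOf d)
    have hpp := hpentapent _ _ hadj hd
    have hhp := hhexapent _ _ hadj hd
    omega
  have hnonpos := sum_nonpos (s := univ) fun F _ => G.charge_nonpos hsize hacross F
  rw [G.sum_charge] at hnonpos
  omega
end

section
/- The system of equations d(t-1) - t + 2 = 0, d + t + dt = 0, and 2d + 2dt - 4dt² + 2dt⁴ + 2d²t⁴ = 0 (with d ≠ 0) over ℂ has exactly the two solutions (d,t) = ((1+√5)/2, (1-√5)/2) and ((1-√5)/2, (1+√5)/2); in particular, any solution of the last two equations with d ≠ 0 also satisfies the first. -/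
private lemma key_aux (d t : ℂ) (ht : t^2 = t + 1) (hd : d = 1 - t) :
    d ≠ 0 ∧ d * (t - 1) - t + 2 = 0 ∧ d + t + d * t = 0 ∧
      2*d + 2*d*t - 4*d*t^2 + 2*d*t^4 + 2*d^2*t^4 = 0 := by
  subst hd
  refine ⟨?_, by linear_combination -ht, by linear_combination -ht,
    by linear_combination (2*t^4 - 4*t^3 + 2*t^2 + 2*t - 2) * ht⟩
  intro h
  have h1 : t = 1 := by linear_combination -h
  rw [h1] at ht
  norm_num at ht

private lemma core_aux (d t : ℂ) (hd0 : d ≠ 0) (h2 : d + t + d * t = 0)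
    (h3 : 2*d + 2*d*t - 4*d*t^2 + 2*d*t^4 + 2*d^2*t^4 = 0) :
    t^2 = t + 1 ∧ d = 1 - t := by
  have hA : 1 + t - 2*t^2 + t^4 + d*t^4 = 0 := by
    have h := mul_eq_zero.mp (show (2*d) * (1 + t - 2*t^2 + t^4 + d*t^4) = 0 by
      linear_combination h3)
    rcases h with h | h
    · exact absurd (by rcases mul_eq_zero.mp h with h' | h' <;> simp_all) hd0
    · exact h
  have hsq : (t^2 - t - 1)^2 = 0 := by
    linear_combination (1 + t) * hA - t^4 * h2
  have ht : t^2 - t - 1 = 0 := by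
    exact pow_eq_zero_iff (by norm_num) |>.mp hsq
  have ht0 : t ≠ 0 := by
    intro h; rw [h] at ht; norm_num at ht
  have hdt : d * t = -1 := by
    have h := mul_eq_zero.mp (show t * (d * t + 1) = 0 by linear_combination h2 + d * ht)
    rcases h with h | h
    · exact absurd h ht0
    · linear_combination h
  exact ⟨by linear_combination ht, by linear_combination h2 - hdt⟩

/-- The system `d(t-1) - t + 2 = 0`, `d + t + dt = 0`,
`2d + 2dt - 4dt² + 2dt⁴ + 2d²t⁴ = 0` with `d ≠ 0` has exactly the two solutions
`((1+√5)/2, (1-√5)/2)` and `((1-√5)/2, (1+√5)/2)`; in particular any solution of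
the last two equations with `d ≠ 0` also satisfies the first. -/
theorem stmt_4 :
    (∀ d t : ℂ,
      (d ≠ 0 ∧ d * (t - 1) - t + 2 = 0 ∧ d + t + d * t = 0 ∧
        2*d + 2*d*t - 4*d*t^2 + 2*d*t^4 + 2*d^2*t^4 = 0) ↔
      ((d = (1 + Real.sqrt 5) / 2 ∧ t = (1 - Real.sqrt 5) / 2) ∨
       (d = (1 - Real.sqrt 5) / 2 ∧ t = (1 + Real.sqrt 5) / 2))) ∧
    (∀ d t : ℂ, d ≠ 0 → d + t + d * t = 0 →
      2*d + 2*d*t - 4*d*t^2 + 2*d*t^4 + 2*d^2*t^4 = 0 →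
      d * (t - 1) - t + 2 = 0) := by
  have hs : ((Real.sqrt 5 : ℝ) : ℂ)^2 = 5 := by
    norm_cast
    exact Real.sq_sqrt (by norm_num)

  constructor
  · intro d t
    constructor
    · rintro ⟨hd0, -, h2, h3⟩
      obtain ⟨ht, hd⟩ := core_aux d t hd0 h2 h3
      have hfac : (t - (1 + (Real.sqrt 5 : ℝ)) / 2) * (t - (1 - (Real.sqrt 5 : ℝ)) / 2) = 0 := by
        linear_combination ht - hs / 4
      rcases mul_eq_zero.mp hfac with h | h
      · right
        have ht' : t = (1 + (Real.sqrt 5 : ℝ)) / 2 := by linear_combination h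
        exact ⟨by rw [hd, ht']; ring, ht'⟩
      · left
        have ht' : t = (1 - (Real.sqrt 5 : ℝ)) / 2 := by linear_combination h
        exact ⟨by rw [hd, ht']; ring, ht'⟩
    · rintro (⟨hd, ht⟩ | ⟨hd, ht⟩)
      · exact key_aux d t (by rw [ht]; linear_combination hs / 4) (by rw [hd, ht]; ring)
      · exact key_aux d t (by rw [ht]; linear_combination hs / 4) (by rw [hd, ht]; ring)
  · intro d t hd0 h2 h3
    obtain ⟨ht, hd⟩ := core_aux d t hd0 h2 h3
    exact (key_aux d t ht hd).2.1
end

section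
/- The curve {(d,t) ∈ ℂ² : d + t - dt - 2 = 0} is exactly the image of the map δ ↦ (δ² - 1, (δ² - 3)/(δ² - 2)) defined for δ ∈ ℂ with δ² ≠ 2. -/
/-- The curve `d + t - dt - 2 = 0` is exactly the image of
`δ ↦ (δ² - 1, (δ² - 3)/(δ² - 2))` for `δ² ≠ 2`. -/
theorem stmt_6 :
    {p : ℂ × ℂ | p.1 + p.2 - p.1 * p.2 - 2 = 0} =
      (fun δ : ℂ => (δ^2 - 1, (δ^2 - 3) / (δ^2 - 2))) '' {δ : ℂ | δ^2 ≠ 2} := by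
  ext ⟨d, t⟩
  simp only [Set.mem_setOf_eq, Set.mem_image, Prod.mk.injEq]
  constructor
  · rintro h
    have hd1 : d ≠ 1 := by rintro rfl; norm_num at h
    obtain ⟨δ, hδ⟩ := IsAlgClosed.exists_pow_nat_eq (k := ℂ) (d + 1) (n := 2) (by norm_num)
    refine ⟨δ, ?_, by rw [hδ]; ring, ?_⟩
    · show δ ^ 2 ≠ 2
      rw [hδ]
      intro h2
      exact hd1 (by linear_combination h2)
    · rw [hδ]
      have hne : d + 1 - 2 ≠ 0 := by
        intro h2; exact hd1 (by linear_combination h2)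
      field_simp
      linear_combination h
  · rintro ⟨δ, hδ, h1, h2⟩
    have hne : δ^2 - 2 ≠ 0 := sub_ne_zero.mpr hδ
    subst h1; subst h2
    field_simp
    ring
end

section
/- The common solutions in ℂ² of P_{G2}(d,t) = 0 and (d+t-dt-2)(d+t+dt) = 0 are exactly the five points (-1, 3/2), (-2, -2), (2, 0), (τ, τ̄), and (τ̄, τ), where τ = (1+√5)/2 and τ̄ = (1-√5)/2. -/
/-- The common solutions of `P_{G2}(d,t) = 0` and `(d+t-dt-2)(d+t+dt) = 0` are
exactly the five points `(-1, 3/2)`, `(-2, -2)`, `(2, 0)`, `(τ, τ̄)`, `(τ̄, τ)`,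
where `τ = (1+√5)/2` and `τ̄ = (1-√5)/2`. -/
theorem stmt_10 :
    {p : ℂ × ℂ |
        p.1^2 * p.2^5 + p.1 * (2*p.2^5 - 4*p.2^4 - p.2^3 + 6*p.2^2 + 4*p.2 + 1) +
            p.2^5 - 4*p.2^4 + p.2^3 + 7*p.2^2 - 2 = 0 ∧
        (p.1 + p.2 - p.1 * p.2 - 2) * (p.1 + p.2 + p.1 * p.2) = 0} =
      {((-1 : ℂ), (3/2 : ℂ)), (-2, -2), (2, 0),
       (((1 + Real.sqrt 5) / 2 : ℂ), ((1 - Real.sqrt 5) / 2 : ℂ)),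
       (((1 - Real.sqrt 5) / 2 : ℂ), ((1 + Real.sqrt 5) / 2 : ℂ))} := by
  have hs : ((Real.sqrt 5 : ℝ) : ℂ)^2 = 5 := by
    rw [← Complex.ofReal_pow, Real.sq_sqrt (by norm_num : (5:ℝ) ≥ 0)]
    norm_num
  set s : ℂ := ((Real.sqrt 5 : ℝ) : ℂ) with hs_def
  -- nonzero facts
  have hmul : ((1 + s)/2) * ((1 - s)/2) = -1 := by linear_combination -(1/4) * hs
  have hτ : ((1 + s)/2 : ℂ) ≠ 0 := by
    intro h; rw [h, zero_mul] at hmul; norm_num at hmul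
  have hτ' : ((1 - s)/2 : ℂ) ≠ 0 := by
    intro h; rw [h, mul_zero] at hmul; norm_num at hmul
  have h2mul : ((3 + s)/2) * ((3 - s)/2) = 1 := by linear_combination -(1/4) * hs
  have hσ : ((3 + s)/2 : ℂ) ≠ 0 := by
    intro h; rw [h, zero_mul] at h2mul; norm_num at h2mul
  have hσ' : ((3 - s)/2 : ℂ) ≠ 0 := by
    intro h; rw [h, mul_zero] at h2mul; norm_num at h2mul
  ext ⟨d, t⟩
  simp only [Set.mem_setOf_eq, Set.mem_insert_iff, Set.mem_singleton_iff, Prod.mk.injEq]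
  constructor
  · rintro ⟨h1, h2⟩
    rcases mul_eq_zero.mp h2 with hA | hB
    · -- case A: d + t - d*t - 2 = 0
      have hQ : t * (2*t - 3)^2 * (t^2 - t - 1)^2 = 0 := by
        linear_combination (1 - t)^2 * h1 -
          ((d*(1 - t) + (2 - t))*t^5 + (1 - t)*(2*t^5 - 4*t^4 - t^3 + 6*t^2 + 4*t + 1)) * hA
      rcases mul_eq_zero.mp hQ with hQ1 | hq
      · rcases mul_eq_zero.mp hQ1 with ht | ht
        · -- t = 0, d = 2
          right; right; left
          subst ht
          exact ⟨by linear_combination hA, rfl⟩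
        · -- 2t - 3 = 0
          have ht : t = 3/2 := by
            have := pow_eq_zero_iff (n := 2) (by norm_num) |>.mp ht
            linear_combination (1/2) * this
          subst ht
          left
          exact ⟨by linear_combination -2 * hA, rfl⟩
      · -- t^2 - t - 1 = 0
        have hq' : t^2 - t - 1 = 0 := pow_eq_zero_iff (n := 2) (by norm_num) |>.mp hq
        have hfac : (t - (1 + s)/2) * (t - (1 - s)/2) = 0 := by
          linear_combination hq' - (1/4) * hs
        rcases mul_eq_zero.mp hfac with ht | ht
        · -- t = τ, d = τ̄
          have ht : t = (1 + s)/2 := by linear_combination ht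
          subst ht
          right; right; right; right
          refine ⟨?_, rfl⟩
          have hd : (d - (1 - s)/2) * ((1 - s)/2) = 0 := by
            linear_combination hA - (1/4) * hs
          have := (mul_eq_zero.mp hd).resolve_right hτ'
          linear_combination this
        · -- t = τ̄, d = τ
          have ht : t = (1 - s)/2 := by linear_combination ht
          subst ht
          right; right; right; left
          refine ⟨?_, rfl⟩
          have hd : (d - (1 + s)/2) * ((1 + s)/2) = 0 := by
            linear_combination hA - (1/4) * hs
          have := (mul_eq_zero.mp hd).resolve_right hτ
          linear_combination this
    · -- case B: d + t + d*t = 0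
      have hQ : (t + 2) * (t^2 - t - 1)^2 = 0 := by
        linear_combination ((d*(1 + t) - t)*t^5 + (1 + t)*(2*t^5 - 4*t^4 - t^3 + 6*t^2 + 4*t + 1)) * hB
          - (1 + t)^2 * h1
      rcases mul_eq_zero.mp hQ with ht | hq
      · -- t = -2, d = -2
        have ht : t = -2 := by linear_combination ht
        subst ht
        right; left
        exact ⟨by linear_combination -hB, rfl⟩
      · have hq' : t^2 - t - 1 = 0 := pow_eq_zero_iff (n := 2) (by norm_num) |>.mp hq
        have hfac : (t - (1 + s)/2) * (t - (1 - s)/2) = 0 := by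
          linear_combination hq' - (1/4) * hs
        rcases mul_eq_zero.mp hfac with ht | ht
        · -- t = τ, d = τ̄
          have ht : t = (1 + s)/2 := by linear_combination ht
          subst ht
          right; right; right; right
          refine ⟨?_, rfl⟩
          have hd : (d - (1 - s)/2) * ((3 + s)/2) = 0 := by
            linear_combination hB + (1/4) * hs
          have := (mul_eq_zero.mp hd).resolve_right hσ
          linear_combination this
        · -- t = τ̄, d = τ
          have ht : t = (1 - s)/2 := by linear_combination ht
          subst ht
          right; right; right; left
          refine ⟨?_, rfl⟩
          have hd : (d - (1 + s)/2) * ((3 - s)/2) = 0 := by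
            linear_combination hB + (1/4) * hs
          have := (mul_eq_zero.mp hd).resolve_right hσ'
          linear_combination this
  · rintro (⟨hd, ht⟩ | ⟨hd, ht⟩ | ⟨hd, ht⟩ | ⟨hd, ht⟩ | ⟨hd, ht⟩) <;> subst hd <;> subst ht
    · constructor <;> norm_num
    · constructor <;> norm_num
    · constructor <;> norm_num
    · exact ⟨by linear_combination ((-45 + 75*s + 14*s^2 - 10*s^3 - s^4 - s^5)/128) * hs,
        by linear_combination (-(s^2 - 5)/16) * hs⟩
    · exact ⟨by linear_combination ((-45 - 75*s + 14*s^2 + 10*s^3 - s^4 + s^5)/128) * hs,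
        by linear_combination (-(s^2 - 5)/16) * hs⟩
end

section
/- Let d,t ∈ ℂ with d ≠ 0, d + t + dt ≠ 0, and d + t - dt - 2 ≠ 0, and suppose ξ² = d²t⁴ + 2d(t⁴ - 2t³ - t² + 4t + 2) + (t² - 2t - 1)² with ξ ≠ 0. Then tr(y₊) := -(d³t² + d²(-ξ + 2t² + 2t - 1) + d(ξ + 2t + 3) + ξ - t² + 2t + 1)/(2ξ) is nonzero. -/
/-- In a cubic category with parameters `(d,t)` (so `d ≠ 0`, `d + t + dt ≠ 0`,
`d + t - dt - 2 ≠ 0`) and `ξ ≠ 0` with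
`ξ² = d²t⁴ + 2d(t⁴ - 2t³ - t² + 4t + 2) + (t² - 2t - 1)²`, the trace
`tr(y₊)` is nonzero. -/
theorem stmt_12 (d t ξ : ℂ) (hd : d ≠ 0) (h1 : d + t + d * t ≠ 0)
    (h2 : d + t - d * t - 2 ≠ 0)
    (hξ : ξ^2 = d^2*t^4 + 2*d*(t^4 - 2*t^3 - t^2 + 4*t + 2) + (t^2 - 2*t - 1)^2)
    (hξ0 : ξ ≠ 0) :
    -(d^3*t^2 + d^2*(-ξ + 2*t^2 + 2*t - 1) + d*(ξ + 2*t + 3) + ξ - t^2 + 2*t + 1) /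
        (2*ξ) ≠ 0 := by
  intro h
  have h2ξ : (2:ℂ)*ξ ≠ 0 := by simp [hξ0]
  rw [div_eq_zero_iff] at h
  rcases h with h | h
  · have hN : d^3*t^2 + d^2*(-ξ + 2*t^2 + 2*t - 1) + d*(ξ + 2*t + 3) + ξ - t^2 + 2*t + 1 = 0 :=
      neg_eq_zero.mp h
    have key : d * (d + t + d*t)^3 * (d + t - d*t - 2) = 0 := by
      linear_combination (((-d^2+d+1)*ξ - (d^3*t^2 + d^2*(2*t^2+2*t-1) + d*(2*t+3) - t^2+2*t+1))/4) * hN - ((-d^2+d+1)^2/4) * hξ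
    rcases mul_eq_zero.mp key with key' | hf
    · rcases mul_eq_zero.mp key' with hf | hf
      · exact hd hf
      · exact h1 (pow_eq_zero_iff (by norm_num) |>.mp hf)
    · exact h2 hf
  · exact h2ξ h
end

section
/- Every connected open planar trivalent graph has an internal face with at most five edges, or a growth region. -/
/-- A connected open planar trivalent graph: a trivalent graph embedded in a
disc, meeting the boundary circle in `n ≥ 1` points.  It is encoded as a
combinatorial map on the sphere obtained by adding the boundary circle of the
disc to the graph: darts `D`, edge involution `α` (fixed-point free), vertex
permutation `σ` with all orbits of size `3` (boundary points become trivalent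
vertices: two boundary arcs and one graph edge).  The predicate `bdry` marks
the darts of the boundary arcs of the disc; `outD` is a dart of the outer face
(the outside of the disc), which consists entirely of boundary-arc darts, and
every boundary arc has one side on the outer face.  Faces are orbits of
`σ * α`; connectivity and planarity (Euler's formula) are as usual. -/
structure OpenPlanarTrivalentGraph where
  D : Type
  fintypeD : Fintype D
  σ : Equiv.Perm D
  α : Equiv.Perm D
  bdry : D → Prop
  α_invol : ∀ d, α (α d) = d
  α_fpf : ∀ d, α d ≠ d
  σ_cube : ∀ d, σ (σ (σ d)) = d
  σ_fpf : ∀ d, σ d ≠ d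
  bdry_edge : ∀ d, bdry (α d) ↔ bdry d
  /-- every vertex meeting the boundary circle has exactly two boundary-arc darts -/
  bdry_vertex : ∀ d, bdry d →
    ((bdry (σ d) ∧ ¬ bdry (σ (σ d))) ∨ (¬ bdry (σ d) ∧ bdry (σ (σ d))))
  outD : D
  out_bdry : bdry outD
  outer_all_bdry : ∀ d, (σ * α).SameCycle outD d → bdry d
  bdry_near_outer : ∀ d, bdry d →
    ((σ * α).SameCycle outD d ∨ (σ * α).SameCycle outD (α d))
  connected : ∀ d d' : D, ∃ g ∈ Subgroup.closure ({σ, α} : Set (Equiv.Perm D)), g d = d'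
  euler : 2 * (Nat.card (Quotient σ.cycleSetoid) + Nat.card (Quotient (σ * α).cycleSetoid))
            = Nat.card D + 4

namespace OpenPlanarTrivalentGraph

variable (G : OpenPlanarTrivalentGraph)

instance : Fintype G.D := G.fintypeD

/-- The face permutation. -/
def φ : Equiv.Perm G.D := G.σ * G.α

/-- The faces: orbits of the face permutation (including the outer face). -/
def Faces := Quotient G.φ.cycleSetoid

/-- The face containing a given dart. -/
def faceOf (d : G.D) : G.Faces := Quotient.mk G.φ.cycleSetoid d

/-- The outer face (the outside of the disc). -/
def outerFace : G.Faces := G.faceOf G.outD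

/-- An internal face: a face, other than the outer face, not touching the
boundary of the disc. -/
def InternalFace (F : G.Faces) : Prop :=
  F ≠ G.outerFace ∧ ∀ d : G.D, G.faceOf d = F → ¬ G.bdry d

/-- A boundary face: a face, other than the outer face, touching the boundary
circle of the disc. -/
def BoundaryFace (F : G.Faces) : Prop :=
  F ≠ G.outerFace ∧ ∃ d : G.D, G.faceOf d = F ∧ G.bdry d

/-- The number of (graph-)edges a face touches, with multiplicity: the number
of non-boundary darts in the corresponding orbit. -/
noncomputable def faceEdges (F : G.Faces) : ℕ :=
  Nat.card {d : G.D // G.faceOf d = F ∧ ¬ G.bdry d}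

/-- The number of disjoint boundary intervals a face meets: the number of
maximal runs of boundary-arc darts in the corresponding orbit. -/
noncomputable def faceIntervals (F : G.Faces) : ℕ :=
  Nat.card {d : G.D // G.faceOf d = F ∧ G.bdry d ∧ ¬ G.bdry (G.φ⁻¹ d)}

/-- The charge `6 - n - 2m` of a face touching `n` edges and `m` disjoint
boundary intervals.  (For an internal `n`-gon this is `6 - n`; for a boundary
face meeting the boundary in a single interval it is `4 - n`.) -/
noncomputable def charge (F : G.Faces) : ℤ :=
  6 - (G.faceEdges F : ℤ) - 2 * (G.faceIntervals F : ℤ)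

/-- Two boundary faces are consecutive along the boundary circle when they are
separated by a graph edge meeting the boundary. -/
def BFAdj (F F' : G.Faces) : Prop :=
  F ≠ F' ∧ ∃ d : G.D, ¬ G.bdry d ∧ (G.bdry (G.σ d) ∨ G.bdry (G.σ (G.σ d))) ∧
    G.faceOf d = F ∧ G.faceOf (G.α d) = F'

/-- A boundary region: a small neighborhood of a contiguous proper subset of
the boundary faces, recorded by the set of boundary faces it contains. -/
def BoundaryRegion (R : Set G.Faces) : Prop :=
  R.Nonempty ∧ (∀ F ∈ R, G.BoundaryFace F) ∧ (∃ F, G.BoundaryFace F ∧ F ∉ R) ∧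
    ∀ F ∈ R, ∀ F' ∈ R,
      Relation.ReflTransGen (fun A B => G.BFAdj A B ∧ A ∈ R ∧ B ∈ R) F F'

/-- The darts of the graph edges of a boundary region: non-boundary darts whose
edge touches one of the faces of the region. -/
def RegionDart (R : Set G.Faces) (d : G.D) : Prop :=
  ¬ G.bdry d ∧ (G.faceOf d ∈ R ∨ G.faceOf (G.α d) ∈ R)

/-- A graph edge meets the boundary circle when one of its endpoints is a
vertex on the boundary. -/
def MeetsBoundary (d : G.D) : Prop :=
  G.bdry (G.σ d) ∨ G.bdry (G.σ (G.σ d)) ∨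
    G.bdry (G.σ (G.α d)) ∨ G.bdry (G.σ (G.σ (G.α d)))

/-- The number of edges of a boundary region meeting the boundary of the disc
("outgoing edges"). -/
noncomputable def outgoing (R : Set G.Faces) : ℕ :=
  Nat.card {d : G.D // G.RegionDart R d ∧ G.MeetsBoundary d} / 2

/-- The number of edges of a boundary region not meeting the boundary of the
disc ("incoming edges"). -/
noncomputable def incoming (R : Set G.Faces) : ℕ :=
  Nat.card {d : G.D // G.RegionDart R d ∧ ¬ G.MeetsBoundary d} / 2

/-- A growth region: a boundary region with more edges meeting the boundary of
the disc than edges not meeting it. -/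
def GrowthRegion (R : Set G.Faces) : Prop :=
  G.BoundaryRegion R ∧ G.incoming R < G.outgoing R

/-! Euler's formula makes the charges of all faces sum to `12`, and the outer face carries `6`.
If every internal face has at least six edges, internal faces carry charge `≤ 0`, while a
boundary face carries at most `3`; so there are at least two boundary faces, and one of them, `F`,
has positive charge. Since the outer face lies across every boundary arc, a boundary face meets
each boundary interval in a single arc, so `F` has one arc and at most three edges, and the
first and last of them meet the boundary. Hence `{F}` is a growth region: with at most two edges
it has no incoming edge, and with three edges only the middle one can be incoming, while the
outer two are different edges, since otherwise the middle edge would enclose a monogon. -/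

end OpenPlanarTrivalentGraph

lemma card_subtype_eq_sum_card_fiber {X Q : Type*} [Finite X] [Fintype Q] (f : X → Q)
    (p : X → Prop) : Nat.card {x // p x} = ∑ q, Nat.card {x // f x = q ∧ p x} := by
  rw [← Nat.card_sigma]
  exact Nat.card_congr ((Equiv.sigmaFiberEquiv fun x : {x // p x} => f x).symm.trans
    (Equiv.sigmaCongrRight fun q => (Equiv.subtypeSubtypeEquivSubtypeInter p (f · = q)).trans
      (Equiv.subtypeEquivRight fun _ => and_comm)))

namespace Equiv.Perm

variable {X : Type*} [Finite X] {f : Equiv.Perm X}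

theorem sameCycle_iff_of_apply_three (h3 : ∀ x, f (f (f x)) = x) {x y : X} :
    f.SameCycle x y ↔ y = x ∨ y = f x ∨ y = f (f x) := by
  constructor
  · intro h
    have hf : f ^ 3 = 1 := by ext x; simp [pow_succ, h3]
    obtain ⟨i, hi, rfl⟩ := h.exists_pow_eq'
    have : i < 3 := hi.trans_le (Nat.le_of_dvd (by norm_num) (orderOf_dvd_of_pow_eq_one hf))
    interval_cases i <;> simp [pow_succ]
  · rintro (rfl | rfl | rfl)
    exacts [.refl _ _, ⟨1, by simp⟩, ⟨2, by simp [sq]⟩]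

theorem card_eq_three_mul_card_cycles (h3 : ∀ x, f (f (f x)) = x) (h1 : ∀ x, f x ≠ x) :
    Nat.card X = 3 * Nat.card (Quotient f.cycleSetoid) := by
  have := Fintype.ofFinite (Quotient f.cycleSetoid)
  have hfiber (q : Quotient f.cycleSetoid) : Nat.card {x // Quotient.mk _ x = q ∧ True} = 3 := by
    induction q using Quotient.inductionOn with | h x => ?_
    have hx : x ≠ f (f x) := fun h => h1 x (by nth_rw 1 [h]; exact h3 x)
    rw [← Set.ncard_eq_three.mpr ⟨_, _, _, (h1 x).symm, hx, (h1 (f x)).symm, rfl⟩,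
      ← Nat.card_coe_set_eq]
    refine Nat.card_congr (Equiv.subtypeEquivRight fun y => ?_)
    simp only [and_true, Quotient.eq, Set.mem_insert_iff, Set.mem_singleton_iff]
    exact sameCycle_comm.trans (sameCycle_iff_of_apply_three h3)
  rw [← Nat.card_congr (Equiv.subtypeUnivEquiv fun _ => trivial),
    card_subtype_eq_sum_card_fiber (Quotient.mk f.cycleSetoid),
    Finset.sum_congr rfl fun q _ => hfiber q, Finset.sum_const, Finset.card_univ, smul_eq_mul,
    Nat.card_eq_fintype_card, mul_comm]

end Equiv.Perm

namespace OpenPlanarTrivalentGraph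

variable (G : OpenPlanarTrivalentGraph)

noncomputable instance : Fintype G.Faces := @Fintype.ofFinite _ (Quotient.finite _)

lemma σ_inv_apply (d : G.D) : G.σ⁻¹ d = G.σ (G.σ d) := by
  rw [Equiv.Perm.inv_eq_iff_eq, G.σ_cube]

lemma φ_apply (d : G.D) : G.φ d = G.σ (G.α d) := rfl

lemma φ_inv_apply (d : G.D) : G.φ⁻¹ d = G.α (G.σ (G.σ d)) := by
  rw [Equiv.Perm.inv_eq_iff_eq, φ_apply, G.α_invol, G.σ_cube]

lemma bdry_φ_inv_iff (d : G.D) : G.bdry (G.φ⁻¹ d) ↔ G.bdry (G.σ⁻¹ d) := by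
  rw [φ_inv_apply, G.bdry_edge, σ_inv_apply]

lemma faceOf_eq_faceOf_iff {x y : G.D} : G.faceOf x = G.faceOf y ↔ G.φ.SameCycle x y :=
  Quotient.eq

lemma faceOf_pow_apply (n : ℕ) (x : G.D) : G.faceOf ((G.φ ^ n) x) = G.faceOf x :=
  G.faceOf_eq_faceOf_iff.mpr ⟨-n, by simp⟩

lemma faceOf_φ (x : G.D) : G.faceOf (G.φ x) = G.faceOf x := G.faceOf_pow_apply 1 x

lemma faceOf_φ_inv (x : G.D) : G.faceOf (G.φ⁻¹ x) = G.faceOf x :=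
  G.faceOf_eq_faceOf_iff.mpr ⟨1, by simp⟩

lemma bdry_of_faceOf_eq_outerFace {d : G.D} (h : G.faceOf d = G.outerFace) : G.bdry d :=
  G.outer_all_bdry d (G.faceOf_eq_faceOf_iff.mp h).symm

lemma bdry_σ_iff {d : G.D} (hd : G.bdry d) : G.bdry (G.σ d) ↔ ¬ G.bdry (G.σ (G.σ d)) := by
  have := G.bdry_vertex d hd
  tauto

lemma card_bdry_eq_two_mul :
    Nat.card {d // G.bdry d} = 2 * Nat.card {d // G.bdry d ∧ ¬ G.bdry (G.σ⁻¹ d)} := by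
  classical
  have hswap : Nat.card {d // G.bdry d ∧ G.bdry (G.σ⁻¹ d)}
      = Nat.card {d // G.bdry d ∧ ¬ G.bdry (G.σ⁻¹ d)} := by
    refine Nat.card_congr (Equiv.subtypeEquiv G.σ⁻¹ fun d => ?_)
    obtain ⟨e, rfl⟩ := G.σ.surjective d
    rw [show G.σ⁻¹ (G.σ e) = e by simp, σ_inv_apply]
    by_cases he : G.bdry e
    · simp only [he, G.bdry_σ_iff he, and_true, true_and]
    · simp only [he, and_false, false_and]
  rw [two_mul]
  nth_rw 1 [← hswap]
  simp only [Nat.card_eq_fintype_card, Fintype.card_subtype]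
  rw [← Finset.filter_filter, ← Finset.filter_filter, Finset.card_filter_add_card_filter_not]

lemma sum_faceEdges : ∑ F, G.faceEdges F = Nat.card {d // ¬ G.bdry d} :=
  (card_subtype_eq_sum_card_fiber G.faceOf _).symm

lemma sum_faceIntervals :
    ∑ F, G.faceIntervals F = Nat.card {d // G.bdry d ∧ ¬ G.bdry (G.σ⁻¹ d)} := by
  unfold faceIntervals
  rw [← card_subtype_eq_sum_card_fiber G.faceOf]
  exact Nat.card_congr (Equiv.subtypeEquivRight fun d => by rw [bdry_φ_inv_iff])

lemma sum_charge : ∑ F, G.charge F = 12 := by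
  classical
  have hD : Nat.card {d // G.bdry d} + Nat.card {d // ¬ G.bdry d} = Nat.card G.D := by
    have := Fintype.card_subtype_le G.bdry
    simp only [Nat.card_eq_fintype_card, Fintype.card_subtype_compl]
    omega
  have hV := G.σ.card_eq_three_mul_card_cycles G.σ_cube G.σ_fpf
  have hFaces : Nat.card (Quotient (G.σ * G.α).cycleSetoid) = Fintype.card G.Faces :=
    Nat.card_eq_fintype_card (α := G.Faces)
  have hEuler := G.euler
  have hB := G.card_bdry_eq_two_mul
  simp only [charge, Finset.sum_sub_distrib, ← Finset.mul_sum, Finset.sum_const,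
    Finset.card_univ, nsmul_eq_mul, ← Nat.cast_sum, sum_faceEdges, sum_faceIntervals]
  omega

lemma faceEdges_outerFace : G.faceEdges G.outerFace = 0 :=
  Nat.card_eq_zero.mpr (Or.inl ⟨fun y => y.2.2 (G.bdry_of_faceOf_eq_outerFace y.2.1)⟩)

lemma faceIntervals_outerFace : G.faceIntervals G.outerFace = 0 :=
  Nat.card_eq_zero.mpr (Or.inl ⟨fun y => y.2.2.2
    (G.bdry_of_faceOf_eq_outerFace ((G.faceOf_φ_inv _).trans y.2.1))⟩)

lemma charge_outerFace : G.charge G.outerFace = 6 := by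
  simp [charge, faceEdges_outerFace, faceIntervals_outerFace]

/-- The outer face lies across every boundary arc of the other faces, and the vertex condition
then forbids two consecutive boundary arcs on them. -/
lemma not_bdry_φ_inv_of_bdry {d : G.D} (hd : G.bdry d) (hF : G.faceOf d ≠ G.outerFace) :
    ¬ G.bdry (G.φ⁻¹ d) := by
  have hαd : G.φ.SameCycle G.outD (G.α d) :=
    (G.bdry_near_outer d hd).resolve_left fun h => hF (G.faceOf_eq_faceOf_iff.mpr h).symm
  have hσd : G.bdry (G.σ d) := by
    simpa [φ_apply, G.α_invol] using G.outer_all_bdry _ (hαd.trans ⟨1, rfl⟩)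
  rw [φ_inv_apply, G.bdry_edge]
  exact (G.bdry_σ_iff hd).mp hσd

lemma faceIntervals_eq_card_bdry {F : G.Faces} (hF : F ≠ G.outerFace) :
    G.faceIntervals F = Nat.card {d // G.faceOf d = F ∧ G.bdry d} :=
  Nat.card_congr (Equiv.subtypeEquivRight fun _ => and_congr_right fun hd =>
    and_iff_left_of_imp fun hb => G.not_bdry_φ_inv_of_bdry hb (hd ▸ hF))

lemma faceIntervals_le_faceEdges (F : G.Faces) : G.faceIntervals F ≤ G.faceEdges F :=
  Nat.card_le_card_of_injective
    (fun y => ⟨G.φ⁻¹ y.1, (G.faceOf_φ_inv _).trans y.2.1, y.2.2.2⟩)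
    fun _ _ h => Subtype.ext (G.φ⁻¹.injective (congrArg Subtype.val h))

lemma faceIntervals_pos {F : G.Faces} (hF : G.BoundaryFace F) : 0 < G.faceIntervals F := by
  obtain ⟨hout, d, hdF, hd⟩ := hF
  rw [G.faceIntervals_eq_card_bdry hout]
  exact Nat.card_pos_iff.mpr ⟨⟨⟨d, hdF, hd⟩⟩, inferInstance⟩

lemma charge_le_three {F : G.Faces} (hF : G.BoundaryFace F) : G.charge F ≤ 3 := by
  have := G.faceIntervals_pos hF
  have := G.faceIntervals_le_faceEdges F
  simp only [charge]
  omega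

lemma faceIntervals_eq_one_and_faceEdges_le_three {F : G.Faces} (hF : G.BoundaryFace F)
    (hc : 0 < G.charge F) : G.faceIntervals F = 1 ∧ G.faceEdges F ≤ 3 := by
  have := G.faceIntervals_pos hF
  have := G.faceIntervals_le_faceEdges F
  simp only [charge] at hc
  omega

open Classical in
lemma six_le_sum_charge_boundaryFace (hsmall : ∀ F, G.InternalFace F → 5 < G.faceEdges F) :
    6 ≤ ∑ F ∈ Finset.univ.filter G.BoundaryFace, G.charge F := by
  have hrest : ∑ F ∈ Finset.univ.filter (¬ G.BoundaryFace ·), G.charge F ≤ 6 := by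
    calc _ ≤ ∑ F ∈ Finset.univ.filter (¬ G.BoundaryFace ·),
          if F = G.outerFace then (6 : ℤ) else 0 :=
          Finset.sum_le_sum fun F hF => ?_
      _ ≤ 6 := by rw [Finset.sum_ite_eq']; split_ifs <;> norm_num
    split_ifs with hout
    · rw [hout, charge_outerFace]
    · have hint : G.InternalFace F := ⟨hout, fun d hd hb =>
        (Finset.mem_filter.mp hF).2 ⟨hout, d, hd, hb⟩⟩
      have := hsmall F hint
      simp only [charge]
      omega
  have hsum := G.sum_charge
  rw [← Finset.sum_filter_add_sum_filter_not Finset.univ G.BoundaryFace] at hsum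
  linarith

lemma exists_boundaryFace_charge_pos (hsmall : ∀ F, G.InternalFace F → 5 < G.faceEdges F) :
    ∃ F F', G.BoundaryFace F ∧ 0 < G.charge F ∧ G.BoundaryFace F' ∧ F' ≠ F := by
  classical
  have hsum := G.six_le_sum_charge_boundaryFace hsmall
  obtain ⟨F, hF, hcF⟩ := Finset.exists_lt_of_sum_lt (s := Finset.univ.filter G.BoundaryFace)
    (f := fun _ => (0 : ℤ)) (g := G.charge) (by simp only [Finset.sum_const_zero]; linarith)
  have hcard : 1 < (Finset.univ.filter G.BoundaryFace).card := by
    have hle := Finset.sum_le_card_nsmul (Finset.univ.filter G.BoundaryFace) (G.charge ·) 3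
      fun F hF => G.charge_le_three (Finset.mem_filter.mp hF).2
    rw [nsmul_eq_mul] at hle
    omega
  obtain ⟨F', hF', hne⟩ := Finset.exists_mem_ne hcard F
  exact ⟨F, F', (Finset.mem_filter.mp hF).2, hcF, (Finset.mem_filter.mp hF').2, hne⟩

lemma bdry_iff_eq_of_faceIntervals_eq_one {F : G.Faces} (hm : G.faceIntervals F = 1)
    {d y : G.D} (hdF : G.faceOf d = F) (hd : G.bdry d) (hyF : G.faceOf y = F) :
    G.bdry y ↔ y = d := by
  have hout : F ≠ G.outerFace := by rintro rfl; simp [faceIntervals_outerFace] at hm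
  rw [G.faceIntervals_eq_card_bdry hout, Nat.card_eq_one_iff_unique] at hm
  exact ⟨fun hy => congrArg Subtype.val (hm.1.elim ⟨y, hyF, hy⟩ ⟨d, hdF, hd⟩), fun h => h ▸ hd⟩

lemma le_faceEdges_of_injective {F : G.Faces} {k : ℕ} (f : Fin k → G.D) (hf : f.Injective)
    (hF : ∀ i, G.faceOf (f i) = F ∧ ¬ G.bdry (f i)) : k ≤ G.faceEdges F := by
  simpa [faceEdges] using Nat.card_le_card_of_injective
    (β := {d // G.faceOf d = F ∧ ¬ G.bdry d}) (fun i => ⟨f i, hF i⟩)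
    fun i j h => hf (congrArg Subtype.val h)

/-- On a face with a single boundary arc `d`, the face permutation runs through distinct edge
darts before it reaches `d`, so it does so within `faceEdges F` steps. -/
lemma exists_pow_apply_eq_of_faceIntervals_eq_one {F : G.Faces} (hm : G.faceIntervals F = 1)
    {d x : G.D} (hdF : G.faceOf d = F) (hd : G.bdry d) (hxF : G.faceOf x = F)
    (hx : ¬ G.bdry x) : ∃ s, 1 ≤ s ∧ s ≤ G.faceEdges F ∧ (G.φ ^ s) x = d := by
  classical
  have hex : ∃ s, 0 < s ∧ (G.φ ^ s) x = d := by
    obtain ⟨s, hs, -, h⟩ := (G.faceOf_eq_faceOf_iff.mp (hxF.trans hdF.symm)).exists_pow_eq''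
    exact ⟨s, hs, h⟩
  obtain ⟨hs, hsd⟩ := Nat.find_spec hex
  set s := Nat.find hex
  have hne : ∀ j < s, (G.φ ^ j) x ≠ d := by
    rintro (_ | j) hj h
    · rw [pow_zero, Equiv.Perm.one_apply] at h
      exact hx (h ▸ hd)
    · exact Nat.find_min hex hj ⟨j.succ_pos, h⟩
  have hinj : Function.Injective fun j : Fin s => (G.φ ^ (j : ℕ)) x := by
    refine Function.Injective.of_lt_imp_ne fun i j (hij : (i : ℕ) < j) h => ?_
    apply hne (s - (j - i)) (by omega)
    calc (G.φ ^ (s - (j - i))) x = (G.φ ^ (s - j)) ((G.φ ^ (i : ℕ)) x) := by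
          rw [← Equiv.Perm.mul_apply, ← pow_add]; congr 2; omega
      _ = d := by rw [h, ← Equiv.Perm.mul_apply, ← pow_add, Nat.sub_add_cancel j.2.le, hsd]
  refine ⟨s, hs, G.le_faceEdges_of_injective _ hinj fun j => ⟨?_, ?_⟩, hsd⟩
  · rw [faceOf_pow_apply, hxF]
  · rw [G.bdry_iff_eq_of_faceIntervals_eq_one hm hdF hd ((G.faceOf_pow_apply _ _).trans hxF)]
    exact hne j j.2

lemma eq_or_eq_or_eq_of_faceEdges_le_three {F : G.Faces} (hm : G.faceIntervals F = 1)
    (hn : G.faceEdges F ≤ 3) {d b₁ b₂ b₃ x : G.D} (hdF : G.faceOf d = F) (hd : G.bdry d)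
    (hb₁ : G.φ b₁ = d) (hb₂ : G.φ b₂ = b₁) (hb₃ : G.φ b₃ = b₂) (hxF : G.faceOf x = F)
    (hx : ¬ G.bdry x) : x = b₁ ∨ x = b₂ ∨ x = b₃ := by
  obtain ⟨s, hs1, hs3, hsd⟩ := G.exists_pow_apply_eq_of_faceIntervals_eq_one hm hdF hd hxF hx
  have h₁ (y) (h : G.φ y = d) : y = b₁ := G.φ.injective (h.trans hb₁.symm)
  have h₂ (y) (h : G.φ y = b₁) : y = b₂ := G.φ.injective (h.trans hb₂.symm)
  have h₃ (y) (h : G.φ y = b₂) : y = b₃ := G.φ.injective (h.trans hb₃.symm)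
  have : s ≤ 3 := hs3.trans hn
  interval_cases s <;> simp only [pow_succ, pow_zero, one_mul, Equiv.Perm.mul_apply] at hsd
  exacts [Or.inl (h₁ _ hsd), Or.inr (Or.inl (h₂ _ (h₁ _ hsd))),
    Or.inr (Or.inr (h₃ _ (h₂ _ (h₁ _ hsd))))]

lemma meetsBoundary_α_iff (x : G.D) : G.MeetsBoundary (G.α x) ↔ G.MeetsBoundary x := by
  unfold MeetsBoundary
  rw [G.α_invol]
  tauto

lemma meetsBoundary_of_bdry_φ {e : G.D} (h : G.bdry (G.φ e)) : G.MeetsBoundary e :=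
  Or.inr (Or.inr (Or.inl h))

lemma meetsBoundary_of_bdry_φ_inv {e : G.D} (h : G.bdry (G.φ⁻¹ e)) : G.MeetsBoundary e := by
  rw [φ_inv_apply, G.bdry_edge] at h
  exact Or.inr (Or.inl h)

lemma card_le_outgoing {R : Set G.Faces} (S : Finset G.D)
    (hS : ∀ x ∈ S, G.faceOf x ∈ R ∧ ¬ G.bdry x ∧ G.MeetsBoundary x)
    (hα : ∀ x ∈ S, G.α x ∉ S) : S.card ≤ G.outgoing R := by
  classical
  have hdisj : Disjoint S (S.map G.α.toEmbedding) := by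
    refine Finset.disjoint_left.mpr fun x hx hx' => ?_
    obtain ⟨y, hy, rfl⟩ := Finset.mem_map.mp hx'
    exact hα y hy hx
  have hsub : S ∪ S.map G.α.toEmbedding
      ⊆ Finset.univ.filter fun x => G.RegionDart R x ∧ G.MeetsBoundary x := by
    intro x hx
    simp only [Finset.mem_union, Finset.mem_map, Equiv.coe_toEmbedding, Finset.mem_filter,
      Finset.mem_univ, true_and] at hx ⊢
    rcases hx with hx | ⟨y, hy, rfl⟩
    · obtain ⟨hR, hb, hM⟩ := hS x hx
      exact ⟨⟨hb, Or.inl hR⟩, hM⟩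
    · obtain ⟨hR, hb, hM⟩ := hS y hy
      exact ⟨⟨by rwa [G.bdry_edge], Or.inr (by rwa [G.α_invol])⟩,
        (G.meetsBoundary_α_iff y).mpr hM⟩
  have hle := Finset.card_le_card hsub
  rw [Finset.card_union_of_disjoint hdisj, Finset.card_map] at hle
  unfold outgoing
  rw [Nat.card_eq_fintype_card, Fintype.card_subtype]
  omega

lemma incoming_le_card {R : Set G.Faces} (S : Finset G.D)
    (hS : ∀ x, G.faceOf x ∈ R → ¬ G.bdry x → ¬ G.MeetsBoundary x → x ∈ S) :
    G.incoming R ≤ S.card := by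
  classical
  have hsub : Finset.univ.filter (fun x => G.RegionDart R x ∧ ¬ G.MeetsBoundary x)
      ⊆ S ∪ S.map G.α.toEmbedding := by
    intro x hx
    simp only [Finset.mem_union, Finset.mem_map, Equiv.coe_toEmbedding, Finset.mem_filter,
      Finset.mem_univ, true_and] at hx ⊢
    obtain ⟨⟨hb, hR | hR⟩, hM⟩ := hx
    · exact Or.inl (hS x hR hb hM)
    · exact Or.inr ⟨G.α x, hS _ hR (by rwa [G.bdry_edge]) (by rwa [G.meetsBoundary_α_iff]),
        G.α_invol x⟩
  have hle := (Finset.card_le_card hsub).trans (Finset.card_union_le _ _)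
  rw [Finset.card_map] at hle
  unfold incoming
  rw [Nat.card_eq_fintype_card, Fintype.card_subtype]
  omega

/-- A face running `z → y → x` with `z = α x` traverses the edge of `x` twice; the edge of `y`
then bounds a monogon on its other side. -/
lemma φ_apply_eq_self_of_φ_apply_φ_apply {x y z : G.D} (hy : G.φ y = x) (hz : G.φ z = y)
    (hzx : z = G.α x) : G.φ (G.α y) = G.α y := by
  rw [hzx, φ_apply, G.α_invol] at hz
  rw [φ_apply] at hy ⊢
  rw [G.α_invol]
  calc G.σ y = G.σ (G.σ (G.σ (G.α y))) := by rw [hy, hz]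
    _ = G.α y := G.σ_cube _

lemma internalFace_and_faceEdges_eq_one_of_φ_apply_eq_self {x : G.D} (hx : ¬ G.bdry x)
    (h : G.φ x = x) :
    G.InternalFace (G.faceOf x) ∧ G.faceEdges (G.faceOf x) = 1 := by
  have hface : ∀ y, G.faceOf y = G.faceOf x → y = x := by
    intro y hy
    obtain ⟨k, rfl⟩ := G.faceOf_eq_faceOf_iff.mp hy.symm
    exact Equiv.Perm.zpow_apply_eq_self_of_apply_eq_self h k
  refine ⟨⟨fun hout => hx (G.bdry_of_faceOf_eq_outerFace hout),
    fun y hy => hface y hy ▸ hx⟩, Nat.card_eq_one_iff_unique.mpr ⟨⟨fun a b => ?_⟩, ⟨⟨x, rfl, hx⟩⟩⟩⟩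
  exact Subtype.ext ((hface _ a.2.1).trans (hface _ b.2.1).symm)

lemma boundaryRegion_singleton {F F' : G.Faces} (hF : G.BoundaryFace F)
    (hF' : G.BoundaryFace F') (hne : F' ≠ F) : G.BoundaryRegion {F} := by
  refine ⟨Set.singleton_nonempty F, fun _ h => h ▸ hF, ⟨F', hF', hne⟩, ?_⟩
  rintro _ rfl _ rfl
  exact Relation.ReflTransGen.refl

lemma incoming_lt_outgoing_of_forall_meetsBoundary {F : G.Faces} {x : G.D}
    (hxF : G.faceOf x = F) (hx : ¬ G.bdry x)
    (hall : ∀ y, G.faceOf y = F → ¬ G.bdry y → G.MeetsBoundary y) :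
    G.incoming {F} < G.outgoing {F} := by
  classical
  have hin := G.incoming_le_card (R := {F}) ∅ fun y hyF hy hyM => absurd (hall y hyF hy) hyM
  have hout := G.card_le_outgoing (R := {F}) {x} (by simpa using ⟨hxF, hx, hall x hxF hx⟩)
    (by simpa using G.α_fpf x)
  simp only [Finset.card_empty, Finset.card_singleton] at hin hout
  omega

lemma incoming_lt_outgoing_of_two_meetsBoundary {F : G.Faces} {x y z : G.D}
    (hx : G.faceOf x = F ∧ ¬ G.bdry x ∧ G.MeetsBoundary x)
    (hz : G.faceOf z = F ∧ ¬ G.bdry z ∧ G.MeetsBoundary z) (hzx : z ≠ x) (hzαx : z ≠ G.α x)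
    (hy : ∀ w, G.faceOf w = F → ¬ G.bdry w → ¬ G.MeetsBoundary w → w = y) :
    G.incoming {F} < G.outgoing {F} := by
  classical
  have hin := G.incoming_le_card (R := {F}) {y} fun w hwF hw hwM => by simp [hy w hwF hw hwM]
  have hxαz : x ≠ G.α z := fun h => hzαx (by rw [h, G.α_invol])
  have hout := G.card_le_outgoing (R := {F}) {x, z}
    (by simpa using ⟨hx, hz⟩) (by simp [G.α_fpf, hzαx.symm, hxαz.symm])
  rw [Finset.card_singleton] at hin
  rw [Finset.card_pair hzx.symm] at hout
  omega

/-- The boundary face `F` with positive charge is bounded by its boundary arc `d` and at most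
three edge darts `b₃ → b₂ → b₁ → d`; all of them meet the boundary except possibly `b₂`, and if
`b₃` is the reverse of `b₁` then the edge `b₂` encloses a monogon. -/
lemma incoming_lt_outgoing_singleton (hsmall : ∀ F, G.InternalFace F → 5 < G.faceEdges F)
    {F : G.Faces} (hF : G.BoundaryFace F) (hc : 0 < G.charge F) :
    G.incoming {F} < G.outgoing {F} := by
  obtain ⟨hm, hn⟩ := G.faceIntervals_eq_one_and_faceEdges_le_three hF hc
  obtain ⟨hout, d, hdF, hd⟩ := hF
  obtain ⟨b₁, hb₁⟩ := G.φ.surjective d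
  obtain ⟨b₂, hb₂⟩ := G.φ.surjective b₁
  obtain ⟨b₃, hb₃⟩ := G.φ.surjective b₂
  have hF₁ : G.faceOf b₁ = F := by rw [← G.faceOf_φ, hb₁, hdF]
  have hF₂ : G.faceOf b₂ = F := by rw [← G.faceOf_φ, hb₂, hF₁]
  have hF₃ : G.faceOf b₃ = F := by rw [← G.faceOf_φ, hb₃, hF₂]
  have hbdry (y) (hy : G.faceOf y = F) : G.bdry y ↔ y = d :=
    G.bdry_iff_eq_of_faceIntervals_eq_one hm hdF hd hy
  have hedge (x) (hxF : G.faceOf x = F) (hx : ¬ G.bdry x) : x = b₁ ∨ x = b₂ ∨ x = b₃ :=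
    G.eq_or_eq_or_eq_of_faceEdges_le_three hm hn hdF hd hb₁ hb₂ hb₃ hxF hx
  have hnb₁ : ¬ G.bdry b₁ := by
    simpa [← hb₁] using G.not_bdry_φ_inv_of_bdry hd (hdF ▸ hout)
  have hM₁ : G.MeetsBoundary b₁ := G.meetsBoundary_of_bdry_φ (hb₁ ▸ hd)
  by_cases hshort : b₂ = d ∨ b₃ = d
  · refine G.incoming_lt_outgoing_of_forall_meetsBoundary hF₁ hnb₁ fun x hxF hx => ?_
    rcases hedge x hxF hx with rfl | rfl | rfl
    · exact hM₁
    · have h₃ : b₃ = d := hshort.resolve_left fun h => hx (h ▸ hd)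
      exact G.meetsBoundary_of_bdry_φ_inv (by rwa [Equiv.Perm.inv_eq_iff_eq.mpr hb₃.symm, h₃])
    · have h₂ : b₂ = d := hshort.resolve_right fun h => hx (h ▸ hd)
      rwa [G.φ.injective (hb₃.trans (h₂.trans hb₁.symm))]
  obtain ⟨h₂, h₃⟩ := not_or.mp hshort
  have hnb₃ : ¬ G.bdry b₃ := (hbdry b₃ hF₃).not.mpr h₃
  have h₄ : G.bdry (G.φ⁻¹ b₃) := by
    by_contra h₄
    rcases hedge _ (by rw [faceOf_φ_inv, hF₃]) h₄ with h | h | h <;>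
      rw [Equiv.Perm.inv_eq_iff_eq] at h
    · exact h₃ (h.trans hb₁)
    · exact h₂ (by rw [← hb₃, h, hb₂, hb₁])
    · exact h₃ (by rw [← hb₁, ← hb₂, ← hb₃, ← h, ← h, ← h])
  have hM₃ : G.MeetsBoundary b₃ := G.meetsBoundary_of_bdry_φ_inv h₄
  by_cases hmono : b₃ = G.α b₁
  · obtain ⟨hint, hone⟩ := G.internalFace_and_faceEdges_eq_one_of_φ_apply_eq_self (x := G.α b₂)
      (by rwa [G.bdry_edge, hbdry b₂ hF₂]) (G.φ_apply_eq_self_of_φ_apply_φ_apply hb₂ hb₃ hmono)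
    have := hsmall _ hint
    omega
  refine G.incoming_lt_outgoing_of_two_meetsBoundary (y := b₂) ⟨hF₁, hnb₁, hM₁⟩ ⟨hF₃, hnb₃, hM₃⟩
    (fun h => h₂ (by rw [← hb₃, h, hb₁])) hmono fun w hwF hw hwM => ?_
  rcases hedge w hwF hw with rfl | rfl | rfl
  exacts [absurd hM₁ hwM, rfl, absurd hM₃ hwM]

/-- Every connected open planar trivalent graph has an internal face with at
most five edges, or a growth region. -/
theorem stmt_16 (G : OpenPlanarTrivalentGraph) :
    (∃ F : G.Faces, G.InternalFace F ∧ G.faceEdges F ≤ 5) ∨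
      ∃ R : Set G.Faces, G.GrowthRegion R := by
  refine or_iff_not_imp_left.mpr fun hno => ?_
  have hsmall : ∀ F, G.InternalFace F → 5 < G.faceEdges F := fun F hF =>
    lt_of_not_ge fun h => hno ⟨F, hF, h⟩
  obtain ⟨F, F', hF, hc, hF', hne⟩ := G.exists_boundaryFace_charge_pos hsmall
  exact ⟨{F}, G.boundaryRegion_singleton hF hF' hne, G.incoming_lt_outgoing_singleton hsmall hF hc⟩
end OpenPlanarTrivalentGraph
end
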